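/- arXiv:0911.4106 — 4 statements merged into one kernel-verified Lean document; each statement's English description precedes it below -/
import Mathlib

section
/- Let Λ be a lattice of full rank in ℝ² with successive minima λ₁ ≤ λ₂, and let x₁, x₂ ∈ Λ be vectors corresponding to the successive minima. Then x₁, x₂ form a ℤ-basis for Λ, i.e., every vector of Λ is an integer linear combination of x₁ and x₂. -/
noncomputable section

open InnerProductGeometry Real
open scoped Classical

/-- The Euclidean plane `ℝ²`. -/
abbrev E2 := EuclideanSpace ℝ (Fin 2)

/-- `x₁, x₂` form a ℤ-basis of the lattice `Λ ⊆ ℝ²`: they are linearly independent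
over ℝ and `Λ` is exactly the set of their integer linear combinations. -/
def IsZBasis (Λ : Set E2) (x₁ x₂ : E2) : Prop :=
  LinearIndependent ℝ ![x₁, x₂] ∧ Λ = {v : E2 | ∃ a b : ℤ, v = a • x₁ + b • x₂}

/-- `Λ` is a lattice of full rank in `ℝ²`, i.e. `Λ = XZ²` for an invertible matrix `X`. -/
def IsLattice (Λ : Set E2) : Prop := ∃ x₁ x₂ : E2, IsZBasis Λ x₁ x₂

/-- The `i`-th successive minimum of `Λ`:
`λᵢ = inf {λ > 0 : Λ ∩ λB contains i linearly independent nonzero vectors}`. -/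
noncomputable def succMin (Λ : Set E2) (i : ℕ) : ℝ :=
  sInf {r : ℝ | 0 < r ∧ ∃ v : Fin i → E2,
    (∀ j, v j ∈ Λ ∧ ‖v j‖ ≤ r) ∧ LinearIndependent ℝ v}

/-- `|det X|` for the basis matrix with columns `x₁, x₂`. -/
def detB (x₁ x₂ : E2) : ℝ := |x₁ 0 * x₂ 1 - x₁ 1 * x₂ 0|

/-- The determinant of a lattice: `|det X|` for a basis matrix `X` of `Λ`
(independent of the choice of basis). -/
noncomputable def latDet (Λ : Set E2) : ℝ :=
  if h : IsLattice Λ then detB h.choose h.choose_spec.choose else 0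

/-- The lattice packing density `Δ(Λ) = π λ₁² / (4 det Λ)`. -/
noncomputable def density (Λ : Set E2) : ℝ :=
  π * (succMin Λ 1) ^ 2 / (4 * latDet Λ)

/-- `x₁, x₂` are vectors of `Λ` corresponding to the successive minima, chosen so that
the angle between them lies in `[0, π/2]`. -/
def IsMinPair (Λ : Set E2) (x₁ x₂ : E2) : Prop :=
  x₁ ∈ Λ ∧ x₂ ∈ Λ ∧ LinearIndependent ℝ ![x₁, x₂] ∧
    ‖x₁‖ = succMin Λ 1 ∧ ‖x₂‖ = succMin Λ 2 ∧ angle x₁ x₂ ≤ π / 2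

/-- The angle `θ(Λ)` of a lattice: the angle between a pair of vectors corresponding to the
successive minima chosen with angle in `[0, π/2]` (for a well-rounded lattice this does not
depend on the choice of such a pair). -/
noncomputable def latAngle (Λ : Set E2) : ℝ :=
  if h : ∃ p : E2 × E2, IsMinPair Λ p.1 p.2 then angle h.choose.1 h.choose.2 else 0

/-- `Λ` and `Ω` are similar lattices: `Ω = α U Λ` for a nonzero real `α` and an
orthogonal `2×2` matrix `U`. -/
def LatSimilar (Λ Ω : Set E2) : Prop :=
  ∃ (α : ℝ) (U : Matrix (Fin 2) (Fin 2) ℝ), α ≠ 0 ∧ U.transpose * U = 1 ∧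
    Ω = (fun v => α • Matrix.toEuclideanLin U v) '' Λ

/-- The hexagonal lattice, spanned over ℤ by `(1, 0)` and `(1/2, √3/2)`. -/
def hexLattice : Set E2 :=
  {v : E2 | ∃ a b : ℤ, v = a • ((WithLp.equiv 2 (Fin 2 → ℝ)).symm ![1, 0]) +
    b • ((WithLp.equiv 2 (Fin 2 → ℝ)).symm ![1 / 2, Real.sqrt 3 / 2])}

/-! Write `v ∈ Λ` as `α x₁ + β x₂` and subtract the nearest integer combination: the remainder
`w = a x₁ + b x₂` lies in `Λ` and has `|a|, |b| ≤ 1/2`. If `b ≠ 0`, then `w` is independent of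
`x₁`, and by the strict triangle inequality it is shorter than `max ‖x₁‖ ‖x₂‖ = λ₂`, contradicting
the choice of `x₂`. If `b = 0` and `a ≠ 0`, then `w` is a nonzero lattice vector shorter than
`x₁`. Hence `a = b = 0`, i.e. `v` is an integer combination of `x₁, x₂`. -/

lemma setOf_zsmul_add_zsmul_eq_span {M : Type*} [AddCommGroup M] (x y : M) :
    {v : M | ∃ a b : ℤ, v = a • x + b • y} = Submodule.span ℤ {x, y} := by
  ext v
  simp [Submodule.mem_span_pair, eq_comm]

lemma IsLattice.exists_submodule_eq {Λ : Set E2} (hΛ : IsLattice Λ) :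
    ∃ L : Submodule ℤ E2, Λ = L :=
  let ⟨x, y, _, hΛxy⟩ := hΛ
  ⟨_, hΛxy.trans (setOf_zsmul_add_zsmul_eq_span x y)⟩

lemma succMin_one_le_norm {Λ : Set E2} {v : E2} (hv : v ∈ Λ) (hv₀ : v ≠ 0) :
    succMin Λ 1 ≤ ‖v‖ :=
  csInf_le ⟨0, fun _ hr => hr.1.le⟩
    ⟨norm_pos_iff.2 hv₀, fun _ => v, fun _ => ⟨hv, le_rfl⟩, linearIndependent_unique_iff.2 hv₀⟩

lemma succMin_two_le_max_norm {Λ : Set E2} {x v : E2} (hx : x ∈ Λ) (hv : v ∈ Λ)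
    (hxv : LinearIndependent ℝ ![x, v]) : succMin Λ 2 ≤ max ‖x‖ ‖v‖ := by
  have hx₀ : x ≠ 0 := by simpa using hxv.ne_zero 0
  refine csInf_le ⟨0, fun _ hr => hr.1.le⟩
    ⟨lt_max_of_lt_left (norm_pos_iff.2 hx₀), ![x, v], fun j => ?_, hxv⟩
  fin_cases j
  · exact ⟨hx, le_max_left _ _⟩
  · exact ⟨hv, le_max_right _ _⟩

section StrictConvex

variable {E : Type*} [NormedAddCommGroup E] [NormedSpace ℝ E]

lemma norm_smul_lt_norm_of_abs_le_half {c : ℝ} (hc : |c| ≤ 1 / 2) {z : E} (hz : z ≠ 0) :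
    ‖c • z‖ < ‖z‖ := by
  have hz' := norm_pos_iff.2 hz
  rw [norm_smul, Real.norm_eq_abs]
  nlinarith

lemma norm_smul_add_smul_lt_max [StrictConvexSpace ℝ E] {x y : E}
    (hxy : LinearIndependent ℝ ![x, y]) {a b : ℝ} (ha : |a| ≤ 1 / 2) (hb : |b| ≤ 1 / 2) :
    ‖a • x + b • y‖ < max ‖x‖ ‖y‖ := by
  have hx : x ≠ 0 := by simpa using hxy.ne_zero 0
  have hy : y ≠ 0 := by simpa using hxy.ne_zero 1
  rcases eq_or_ne a 0 with rfl | ha₀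
  · simpa using (norm_smul_lt_norm_of_abs_le_half hb hy).trans_le (le_max_right _ _)
  rcases eq_or_ne b 0 with rfl | hb₀
  · simpa using (norm_smul_lt_norm_of_abs_le_half ha hx).trans_le (le_max_left _ _)
  have hray : ¬SameRay ℝ (a • x) (b • y) := fun h =>
    sameRay_or_sameRay_neg_iff_not_linearIndependent.1 (Or.inl h)
      ((LinearIndependent.pair_smul_smul_iff ha₀.isUnit hb₀.isUnit).2 hxy)
  calc ‖a • x + b • y‖ < ‖a • x‖ + ‖b • y‖ := norm_add_lt_of_not_sameRay hray
    _ = |a| * ‖x‖ + |b| * ‖y‖ := by simp only [norm_smul, Real.norm_eq_abs]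
    _ ≤ 1 / 2 * max ‖x‖ ‖y‖ + 1 / 2 * max ‖x‖ ‖y‖ := by
        gcongr
        exacts [le_max_left _ _, le_max_right _ _]
    _ = max ‖x‖ ‖y‖ := by ring

variable [StrictConvexSpace ℝ E] {L : Submodule ℤ E} {x₁ x₂ : E}
  (hli : LinearIndependent ℝ ![x₁, x₂])
  (h₁ : ∀ v ∈ L, v ≠ 0 → ‖x₁‖ ≤ ‖v‖)
  (h₂ : ∀ v ∈ L, LinearIndependent ℝ ![x₁, v] → ‖x₂‖ ≤ ‖v‖)
include hli h₁ h₂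

lemma eq_zero_of_smul_add_smul_mem (hx₂ : x₂ ∈ L) {a b : ℝ} (ha : |a| ≤ 1 / 2)
    (hb : |b| ≤ 1 / 2) (hw : a • x₁ + b • x₂ ∈ L) : a = 0 ∧ b = 0 := by
  have hx₁ : x₁ ≠ 0 := by simpa using hli.ne_zero 0
  have hx₂₀ : x₂ ≠ 0 := by simpa using hli.ne_zero 1
  have hb₀ : b = 0 := by
    by_contra hb₀
    have hind : LinearIndependent ℝ ![x₁, a • x₁ + b • x₂] := by
      simpa [hb₀, hli] using
        (LinearIndependent.pair_add_smul_add_smul_iff (R := ℝ) (x := x₁) (y := x₂) (1 : ℝ) 0 a b)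
    have hmax : max ‖x₁‖ ‖x₂‖ = ‖x₂‖ := max_eq_right (h₁ x₂ hx₂ hx₂₀)
    exact (h₂ _ hw hind).not_gt (hmax ▸ norm_smul_add_smul_lt_max hli ha hb)
  subst hb₀
  refine ⟨?_, rfl⟩
  by_contra ha₀
  simp only [zero_smul, add_zero] at hw
  exact (h₁ _ hw (smul_ne_zero ha₀ hx₁)).not_gt (norm_smul_lt_norm_of_abs_le_half ha hx₁)

lemma mem_span_int_of_mem_span_real (hx₁ : x₁ ∈ L) (hx₂ : x₂ ∈ L) {v : E} (hv : v ∈ L)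
    (hvspan : v ∈ Submodule.span ℝ {x₁, x₂}) : v ∈ Submodule.span ℤ {x₁, x₂} := by
  obtain ⟨α, β, rfl⟩ := Submodule.mem_span_pair.1 hvspan
  have hrem : (α - round α) • x₁ + (β - round β) • x₂ ∈ L := by
    convert L.sub_mem hv (L.add_mem (L.smul_mem (round α) hx₁) (L.smul_mem (round β) hx₂))
      using 1
    simp only [← Int.cast_smul_eq_zsmul ℝ]
    module
  obtain ⟨ha, hb⟩ :=
    eq_zero_of_smul_add_smul_mem hli h₁ h₂ hx₂ (abs_sub_round α) (abs_sub_round β) hrem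
  rw [sub_eq_zero] at ha hb
  refine Submodule.mem_span_pair.2 ⟨round α, round β, ?_⟩
  rw [← Int.cast_smul_eq_zsmul ℝ, ← Int.cast_smul_eq_zsmul ℝ, ← ha, ← hb]

end StrictConvex

/-- Vectors `x₁, x₂` corresponding to the successive minima of a full-rank
lattice `Λ ⊆ ℝ²` form a ℤ-basis of `Λ`. -/
theorem stmt2 (Λ : Set E2) (hΛ : IsLattice Λ) (x₁ x₂ : E2)
    (hmem₁ : x₁ ∈ Λ) (hmem₂ : x₂ ∈ Λ) (hli : LinearIndependent ℝ ![x₁, x₂])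
    (hn₁ : ‖x₁‖ = succMin Λ 1) (hn₂ : ‖x₂‖ = succMin Λ 2) :
    IsZBasis Λ x₁ x₂ := by
  obtain ⟨L, rfl⟩ := hΛ.exists_submodule_eq
  have h₁ : ∀ v ∈ L, v ≠ 0 → ‖x₁‖ ≤ ‖v‖ := fun v hv hv₀ => hn₁ ▸ succMin_one_le_norm hv hv₀
  have h₂ : ∀ v ∈ L, LinearIndependent ℝ ![x₁, v] → ‖x₂‖ ≤ ‖v‖ := fun v hv hind =>
    (hn₂ ▸ succMin_two_le_max_norm hmem₁ hv hind).trans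
      (max_le (h₁ v hv (by simpa using hind.ne_zero 1)) le_rfl)
  have hspan : Submodule.span ℝ {x₁, x₂} = ⊤ := by
    simpa [Set.pair_comm] using hli.span_eq_top_of_card_eq_finrank (by simp)
  refine ⟨hli, ?_⟩
  rw [setOf_zsmul_add_zsmul_eq_span]
  refine Set.Subset.antisymm (fun v hv => ?_) (Submodule.span_le.2 (Set.pair_subset hmem₁ hmem₂))
  exact mem_span_int_of_mem_span_real hli h₁ h₂ hmem₁ hmem₂ hv (hspan ▸ Submodule.mem_top)
end
end

section
/- Let Λ be a lattice of full rank in ℝ², and let x₁, x₂ be a ℤ-basis for Λ such that ‖x₁‖ = ‖x₂‖ and the angle θ between x₁ and x₂ lies in the interval [π/3, π/2]. Then every nonzero vector z ∈ Λ satisfies ‖z‖ ≥ ‖x₁‖; consequently x₁, x₂ correspond to the successive minima of Λ and Λ is well-rounded with λ₁ = λ₂ = ‖x₁‖. -/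
noncomputable section

open InnerProductGeometry Real
open scoped Classical

/-! With `r = ‖x₁‖ = ‖x₂‖` we have `‖a x₁ + b x₂‖² = (a² + b²) r² + 2ab ⟪x₁, x₂⟫`, and an angle
in `[π/3, 2π/3]` means `|⟪x₁, x₂⟫| ≤ r² / 2`. Hence `‖a x₁ + b x₂‖² ≥ (a² + b² - |ab|) r² ≥ r²`,
the last step because `a² + b² - |ab|` is a positive integer when `(a, b) ≠ 0`. Since `x₁` and
`x₂` both have length `r`, they realise `λ₁` and `λ₂`. -/

open scoped RealInnerProductSpace

theorem Int.one_le_sq_add_sq_sub_abs_mul {a b : ℤ} (hab : a ≠ 0 ∨ b ≠ 0) :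
    1 ≤ a ^ 2 + b ^ 2 - |a * b| := by
  have hpos : 0 < a ^ 2 + b ^ 2 := by
    rcases hab with ha | hb <;> positivity
  -- `2 (a² + b² - |ab|) = a² + b² + (|a| - |b|)²`
  have : 0 < a ^ 2 + b ^ 2 - |a * b| := by
    nlinarith [sq_nonneg (|a| - |b|), sq_abs a, sq_abs b, abs_mul a b]
  omega

section InnerProductSpace

variable {F : Type*} [NormedAddCommGroup F] [InnerProductSpace ℝ F]

theorem abs_real_inner_le_half_mul_norm_mul_norm {x y : F} (h₁ : π / 3 ≤ angle x y)
    (h₂ : angle x y ≤ 2 * π / 3) : |⟪x, y⟫| ≤ ‖x‖ * ‖y‖ / 2 := by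
  have hcos_le : Real.cos (angle x y) ≤ 1 / 2 := by
    rw [← cos_pi_div_three]
    exact cos_le_cos_of_nonneg_of_le_pi (by positivity) (angle_le_pi x y) h₁
  have hcos_ge : -(1 / 2) ≤ Real.cos (angle x y) := by
    rw [← cos_pi_div_three, ← cos_pi_sub]
    exact cos_le_cos_of_nonneg_of_le_pi (angle_nonneg x y) (by linarith [pi_pos])
      (by linarith)
  rw [← cos_angle_mul_norm_mul_norm, abs_mul, abs_of_nonneg (by positivity : 0 ≤ ‖x‖ * ‖y‖)]
  calc |Real.cos (angle x y)| * (‖x‖ * ‖y‖) ≤ 1 / 2 * (‖x‖ * ‖y‖) := by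
        gcongr
        exact abs_le.mpr ⟨hcos_ge, hcos_le⟩
    _ = ‖x‖ * ‖y‖ / 2 := by ring

theorem norm_le_norm_zsmul_add_zsmul {x y : F} (hxy : ‖x‖ = ‖y‖)
    (hinner : |⟪x, y⟫| ≤ ‖x‖ ^ 2 / 2) {a b : ℤ} (hab : a ≠ 0 ∨ b ≠ 0) : ‖x‖ ≤ ‖a • x + b • y‖ := by
  have hab' : (1 : ℝ) ≤ a ^ 2 + b ^ 2 - |(a : ℝ) * b| := by
    exact_mod_cast Int.one_le_sq_add_sq_sub_abs_mul hab
  have hexpand : ‖a • x + b • y‖ ^ 2 = (a ^ 2 + b ^ 2) * ‖x‖ ^ 2 + 2 * (a * b) * ⟪x, y⟫ := by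
    simp only [← Int.cast_smul_eq_zsmul ℝ, norm_add_sq_real, norm_smul, real_inner_smul_left,
      real_inner_smul_right, mul_pow, Real.norm_eq_abs, sq_abs, ← hxy]
    ring
  have hcross : -(|(a : ℝ) * b| * ‖x‖ ^ 2) ≤ 2 * (a * b) * ⟪x, y⟫ := by
    have := neg_abs_le (2 * ((a : ℝ) * b) * ⟪x, y⟫)
    rw [abs_mul, abs_mul, abs_two] at this
    nlinarith [abs_nonneg ((a : ℝ) * b)]
  refine le_of_sq_le_sq ?_ (norm_nonneg _)
  nlinarith [sq_nonneg ‖x‖]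

end InnerProductSpace

theorem succMin_eq_of_forall_le_norm {Λ : Set E2} {m : ℝ} (hm : 0 < m)
    (hmin : ∀ z ∈ Λ, z ≠ 0 → m ≤ ‖z‖) {i : ℕ} [NeZero i] (v : Fin i → E2)
    (hv : ∀ j, v j ∈ Λ ∧ ‖v j‖ ≤ m) (hli : LinearIndependent ℝ v) : succMin Λ i = m := by
  have hlower : ∀ r ∈ {r : ℝ | 0 < r ∧ ∃ v : Fin i → E2,
      (∀ j, v j ∈ Λ ∧ ‖v j‖ ≤ r) ∧ LinearIndependent ℝ v}, m ≤ r := by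
    rintro r ⟨-, w, hw, hwli⟩
    exact (hmin _ (hw 0).1 (hwli.ne_zero 0)).trans (hw 0).2
  exact le_antisymm (csInf_le ⟨m, hlower⟩ ⟨hm, v, hv, hli⟩)
    (le_csInf ⟨m, hm, v, hv, hli⟩ hlower)

/-- If `x₁, x₂` is a ℤ-basis of `Λ ⊆ ℝ²` with `‖x₁‖ = ‖x₂‖` and the angle
between them in `[π/3, π/2]`, then every nonzero `z ∈ Λ` has `‖z‖ ≥ ‖x₁‖`; consequently
`x₁, x₂` correspond to the successive minima and `Λ` is well-rounded with
`λ₁ = λ₂ = ‖x₁‖`. -/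
theorem stmt3 (Λ : Set E2) (x₁ x₂ : E2) (hbasis : IsZBasis Λ x₁ x₂)
    (hnorm : ‖x₁‖ = ‖x₂‖)
    (hθ₁ : π / 3 ≤ angle x₁ x₂) (hθ₂ : angle x₁ x₂ ≤ π / 2) :
    (∀ z ∈ Λ, z ≠ 0 → ‖x₁‖ ≤ ‖z‖) ∧
      succMin Λ 1 = ‖x₁‖ ∧ succMin Λ 2 = ‖x₁‖ := by
  obtain ⟨hli, hΛ⟩ := hbasis
  have hx₁ : x₁ ≠ 0 := by simpa using hli.ne_zero 0
  have hinner : |⟪x₁, x₂⟫| ≤ ‖x₁‖ ^ 2 / 2 := by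
    have := abs_real_inner_le_half_mul_norm_mul_norm hθ₁ (by linarith [pi_pos])
    rwa [← hnorm, ← sq] at this
  have hmin : ∀ z ∈ Λ, z ≠ 0 → ‖x₁‖ ≤ ‖z‖ := by
    rw [hΛ]
    rintro _ ⟨a, b, rfl⟩ hz
    refine norm_le_norm_zsmul_add_zsmul hnorm hinner ?_
    contrapose! hz
    simp [hz.1, hz.2]
  have hx₁_mem : x₁ ∈ Λ := hΛ ▸ ⟨1, 0, by simp⟩
  have hx₂_mem : x₂ ∈ Λ := hΛ ▸ ⟨0, 1, by simp⟩
  have hpos : 0 < ‖x₁‖ := norm_pos_iff.mpr hx₁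
  refine ⟨hmin, succMin_eq_of_forall_le_norm hpos hmin (fun _ => x₁)
    (fun _ => ⟨hx₁_mem, le_rfl⟩) (linearIndependent_unique_iff.mpr hx₁),
    succMin_eq_of_forall_le_norm hpos hmin ![x₁, x₂] ?_ hli⟩
  intro j
  fin_cases j
  · exact ⟨hx₁_mem, le_rfl⟩
  · exact ⟨hx₂_mem, hnorm.ge⟩
end
end

section
/- Let Λ be a lattice of full rank in ℝ² with successive minima λ₁ ≤ λ₂ and corresponding minimal basis vectors x₁, x₂. Then the lattice Λ_WR spanned over ℤ by x₁ and (λ₁/λ₂)x₂ is well-rounded, and both of its successive minima are equal to λ₁. -/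
noncomputable section

open InnerProductGeometry Real
open scoped Classical

/-! Since `x₂` realises the second minimum, `‖x₂ ± x₁‖ ≥ ‖x₂‖`, i.e. `2 |⟪x₁, x₂⟫| ≤ ‖x₁‖²`.
Scaling `x₂` by `λ₁ / λ₂ ≤ 1` keeps this inequality and gives two generators of length `λ₁`.
For such a pair `u, v` of common length `r`, every integer combination with `(a, b) ≠ 0`
satisfies `‖a u + b v‖² ≥ (a² - |a b| + b²) r² ≥ r²`, so `r` is both successive minima. -/

open scoped InnerProductSpace

theorem Int.one_le_sq_sub_abs_mul_add_sq {a b : ℤ} (h : a ≠ 0 ∨ b ≠ 0) :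
    1 ≤ a ^ 2 - |a * b| + b ^ 2 := by
  have hpos : 0 < a ^ 2 - |a * b| + b ^ 2 := by
    rcases h with h | h <;> have := pow_pos (abs_pos.2 h) 2 <;>
      rcases abs_cases (a * b) with ⟨hab, -⟩ | ⟨hab, -⟩ <;>
      nlinarith [sq_nonneg (a + b), sq_nonneg (a - b), sq_abs a, sq_abs b]
  omega

section ReducedPair

variable {F : Type*} [NormedAddCommGroup F] [InnerProductSpace ℝ F] {u v : F}

theorem norm_le_norm_zsmul_add_zsmul_of_reduced (hv : ‖v‖ = ‖u‖)
    (hred : 2 * |⟪u, v⟫_ℝ| ≤ ‖u‖ ^ 2) {a b : ℤ} (hab : a ≠ 0 ∨ b ≠ 0) :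
    ‖u‖ ≤ ‖a • u + b • v‖ := by
  have hab' : (1 : ℝ) ≤ (a : ℝ) ^ 2 - |(a : ℝ) * b| + (b : ℝ) ^ 2 := by
    exact_mod_cast Int.one_le_sq_sub_abs_mul_add_sq hab
  have hcross : -(|(a : ℝ) * b| * ‖u‖ ^ 2) ≤ 2 * ((a : ℝ) * b * ⟪u, v⟫_ℝ) := by
    have := neg_abs_le ((a : ℝ) * b * ⟪u, v⟫_ℝ)
    rw [abs_mul] at this
    nlinarith [abs_nonneg ((a : ℝ) * b)]
  have hsq : ‖u‖ ^ 2 ≤ ‖a • u + b • v‖ ^ 2 := calc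
    ‖u‖ ^ 2 ≤ ((a : ℝ) ^ 2 - |(a : ℝ) * b| + (b : ℝ) ^ 2) * ‖u‖ ^ 2 :=
      le_mul_of_one_le_left (sq_nonneg _) hab'
    _ ≤ (a : ℝ) ^ 2 * ‖u‖ ^ 2 + 2 * ((a : ℝ) * b * ⟪u, v⟫_ℝ) + (b : ℝ) ^ 2 * ‖v‖ ^ 2 := by
      rw [hv]; linarith
    _ = ‖a • u + b • v‖ ^ 2 := by
      rw [← Int.cast_smul_eq_zsmul ℝ a, ← Int.cast_smul_eq_zsmul ℝ b, norm_add_sq_real,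
        norm_smul, norm_smul, real_inner_smul_left, real_inner_smul_right, mul_pow, mul_pow,
        Real.norm_eq_abs, Real.norm_eq_abs, sq_abs, sq_abs]
      ring
  exact (pow_le_pow_iff_left₀ (norm_nonneg _) (norm_nonneg _) two_ne_zero).1 hsq

end ReducedPair

section SuccMin

variable {S : Set E2} {i : ℕ} [NeZero i] {r : ℝ}

theorem succMin_le_of_linearIndependent (v : Fin i → E2) (hv : ∀ j, v j ∈ S ∧ ‖v j‖ ≤ r)
    (hli : LinearIndependent ℝ v) : succMin S i ≤ r :=
  csInf_le ⟨0, fun _ hs => hs.1.le⟩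
    ⟨(norm_pos_iff.2 (hli.ne_zero 0)).trans_le (hv 0).2, v, hv, hli⟩

theorem succMin_eq_of_forall_le_norm_s5 (v : Fin i → E2) (hv : ∀ j, v j ∈ S ∧ ‖v j‖ ≤ r)
    (hli : LinearIndependent ℝ v) (hS : ∀ w ∈ S, w ≠ 0 → r ≤ ‖w‖) : succMin S i = r := by
  refine (succMin_le_of_linearIndependent v hv hli).antisymm ?_
  refine le_csInf ⟨r, (norm_pos_iff.2 (hli.ne_zero 0)).trans_le (hv 0).2, v, hv, hli⟩ ?_
  rintro s ⟨-, w, hw, hwli⟩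
  exact (hS _ (hw 0).1 (hwli.ne_zero 0)).trans (hw 0).2

theorem succMin_one_le_norm_s5 {w : E2} (hw : w ∈ S) (hw0 : w ≠ 0) : succMin S 1 ≤ ‖w‖ :=
  succMin_le_of_linearIndependent ![w] (fun j => by fin_cases j; simpa using hw)
    ((linearIndependent_unique_iff (v := ![w])).2 (by simpa using hw0))

theorem succMin_two_le_max {w₁ w₂ : E2} (hw₁ : w₁ ∈ S) (hw₂ : w₂ ∈ S)
    (hli : LinearIndependent ℝ ![w₁, w₂]) : succMin S 2 ≤ max ‖w₁‖ ‖w₂‖ :=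
  succMin_le_of_linearIndependent ![w₁, w₂]
    (fun j => by fin_cases j <;> simp [hw₁, hw₂]) hli

end SuccMin

theorem succMin_zspan_eq_of_reduced {u v : E2} (hli : LinearIndependent ℝ ![u, v])
    (hv : ‖v‖ = ‖u‖) (hred : 2 * |⟪u, v⟫_ℝ| ≤ ‖u‖ ^ 2) (i : ℕ) [NeZero i] (hi : i ≤ 2) :
    succMin {w : E2 | ∃ a b : ℤ, w = a • u + b • v} i = ‖u‖ := by
  have hgen : ∀ k, ![u, v] k ∈ {w : E2 | ∃ a b : ℤ, w = a • u + b • v} ∧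
      ‖![u, v] k‖ ≤ ‖u‖ := by
    intro k
    fin_cases k
    · exact ⟨⟨1, 0, by simp⟩, le_rfl⟩
    · exact ⟨⟨0, 1, by simp⟩, hv.le⟩
  refine succMin_eq_of_forall_le_norm_s5 (fun j => ![u, v] (Fin.castLE hi j)) (fun j => hgen _)
    (hli.comp _ (Fin.castLE_injective hi)) ?_
  rintro _ ⟨a, b, rfl⟩ hw0
  refine norm_le_norm_zsmul_add_zsmul_of_reduced hv hred ?_
  by_contra! hab
  simp [hab.1, hab.2] at hw0

namespace IsMinPair

variable {Λ : Set E2} {x₁ x₂ : E2}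

theorem norm_le_norm (h : IsMinPair Λ x₁ x₂) : ‖x₁‖ ≤ ‖x₂‖ := by
  rw [h.2.2.2.1]
  exact succMin_one_le_norm_s5 h.2.1 (by simpa using h.2.2.1.ne_zero 1)

theorem succMin_two_le_norm (h : IsMinPair Λ x₁ x₂) {w : E2} (hw : w ∈ Λ)
    (hli : LinearIndependent ℝ ![x₁, w]) : succMin Λ 2 ≤ ‖w‖ := by
  refine (succMin_two_le_max h.1 hw hli).trans (max_le ?_ le_rfl)
  rw [h.2.2.2.1]
  exact succMin_one_le_norm_s5 hw (by simpa using hli.ne_zero 1)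

theorem two_mul_abs_inner_le (h : IsMinPair Λ x₁ x₂) (hadd : x₂ + x₁ ∈ Λ)
    (hsub : x₂ - x₁ ∈ Λ) : 2 * |⟪x₁, x₂⟫_ℝ| ≤ ‖x₁‖ ^ 2 := by
  have hle : ∀ w ∈ Λ, LinearIndependent ℝ ![x₁, w] → ‖x₂‖ ^ 2 ≤ ‖w‖ ^ 2 := fun w hw hliw =>
    pow_le_pow_left₀ (norm_nonneg _) (h.2.2.2.2.1 ▸ h.succMin_two_le_norm hw hliw) 2
  have hadd' := hle _ hadd (by simpa [add_comm] using h.2.2.1)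
  have hsub' := hle _ hsub (by
    rw [sub_eq_neg_add, ← neg_one_smul ℝ x₁, LinearIndependent.pair_add_smul_right_iff]
    exact h.2.2.1)
  rw [norm_add_sq_real] at hadd'
  rw [norm_sub_sq_real] at hsub'
  rw [real_inner_comm] at hadd' hsub'
  rcases abs_cases ⟪x₁, x₂⟫_ℝ with ⟨habs, -⟩ | ⟨habs, -⟩ <;> linarith

end IsMinPair

theorem stmt5_general (Λ : Set E2) (x₁ x₂ : E2)
    (hmin : IsMinPair Λ x₁ x₂) (hbasis : IsZBasis Λ x₁ x₂)
    (ΛWR : Set E2)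
    (hdef : ΛWR = {v : E2 | ∃ a b : ℤ,
      v = a • x₁ + b • ((succMin Λ 1 / succMin Λ 2) • x₂)}) :
    succMin ΛWR 1 = succMin ΛWR 2 ∧
      succMin ΛWR 1 = succMin Λ 1 ∧ succMin ΛWR 2 = succMin Λ 1 := by
  have ⟨_, _, hli, hn₁, hn₂, _⟩ := hmin
  have hx₂ : 0 < ‖x₂‖ := norm_pos_iff.2 (by simpa using hli.ne_zero 1)
  set t := succMin Λ 1 / succMin Λ 2
  have ht : t = ‖x₁‖ / ‖x₂‖ := by rw [hn₁, hn₂]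
  have ht₀ : 0 < t := ht ▸ div_pos (norm_pos_iff.2 (by simpa using hli.ne_zero 0)) hx₂
  have ht₁ : t ≤ 1 := ht ▸ div_le_one_of_le₀ hmin.norm_le_norm hx₂.le
  have hnorm : ‖t • x₂‖ = ‖x₁‖ := by
    rw [norm_smul, Real.norm_of_nonneg ht₀.le, ht, div_mul_cancel₀ _ hx₂.ne']
  have hred : 2 * |⟪x₁, t • x₂⟫_ℝ| ≤ ‖x₁‖ ^ 2 := by
    have := hmin.two_mul_abs_inner_le (hbasis.2 ▸ ⟨1, 1, by simp [add_comm]⟩)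
      (hbasis.2 ▸ ⟨-1, 1, by simp [sub_eq_neg_add]⟩)
    rw [real_inner_smul_right, abs_mul, abs_of_pos ht₀]
    nlinarith [abs_nonneg ⟪x₁, x₂⟫_ℝ]
  have hliWR : LinearIndependent ℝ ![x₁, t • x₂] := by
    simpa using (LinearIndependent.pair_smul_smul_iff isUnit_one (Ne.isUnit ht₀.ne')).2 hli
  have hWR (i : ℕ) [NeZero i] (hi : i ≤ 2) : succMin ΛWR i = succMin Λ 1 := by
    rw [hdef, succMin_zspan_eq_of_reduced hliWR hnorm hred i hi, hn₁]
  exact ⟨(hWR 1 le_add_self).trans (hWR 2 le_rfl).symm, hWR 1 le_add_self, hWR 2 le_rfl⟩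

/-- If `x₁, x₂` is a minimal basis of `Λ ⊆ ℝ²` corresponding to the successive
minima `λ₁ ≤ λ₂`, then the lattice `Λ_WR` spanned over ℤ by `x₁` and `(λ₁/λ₂) x₂` is
well-rounded with both successive minima equal to `λ₁`. -/
theorem stmt5 (Λ : Set E2) (hΛ : IsLattice Λ) (x₁ x₂ : E2)
    (hmin : IsMinPair Λ x₁ x₂) (hbasis : IsZBasis Λ x₁ x₂)
    (ΛWR : Set E2)
    (hdef : ΛWR = {v : E2 | ∃ a b : ℤ,
      v = a • x₁ + b • ((succMin Λ 1 / succMin Λ 2) • x₂)}) :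
    succMin ΛWR 1 = succMin ΛWR 2 ∧
      succMin ΛWR 1 = succMin Λ 1 ∧ succMin ΛWR 2 = succMin Λ 1 :=
  stmt5_general Λ x₁ x₂ hmin hbasis ΛWR hdef
end
end

section
/- Let Λ be a lattice of full rank in ℝ². Then the packing density satisfies Δ(Λ) ≤ π/(2√3) = 0.906899..., i.e., Δ(Λ) ≤ Δ(Λ_h), where Λ_h is the hexagonal lattice. -/
noncomputable section

open InnerProductGeometry Real
open scoped Classical

/-
A shortest nonzero vector `u` of `Λ` exists by discreteness and is primitive, so some `w ∈ Λ`
completes it to a basis, i.e. `|cross u w| = det Λ`. Replacing `w` by `w - k u` for the integer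
`k` nearest to `⟪u, w⟫ / ‖u‖²` makes `|⟪u, w⟫| ≤ ‖u‖² / 2`, while `‖u‖ ≤ ‖w‖` by minimality.
Lagrange's identity then gives `(det Λ)² = ‖u‖²‖w‖² - ⟪u, w⟫² ≥ ¾ ‖u‖⁴ = ¾ λ₁⁴`, which is
`Δ(Λ) ≤ π / (2√3)`; the hexagonal lattice, with `λ₁ = 1` and `det Λ_h = √3 / 2`, attains it.
-/

open scoped RealInnerProductSpace

def cross (x y : E2) : ℝ := x 0 * y 1 - x 1 * y 0

lemma inner_eq_fin_two (x y : E2) : ⟪x, y⟫ = x 0 * y 0 + x 1 * y 1 := by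
  simp [PiLp.inner_apply, Fin.sum_univ_two, mul_comm]

lemma norm_sq_eq_fin_two (x : E2) : ‖x‖ ^ 2 = x 0 ^ 2 + x 1 ^ 2 := by
  simp [EuclideanSpace.norm_sq_eq, Fin.sum_univ_two]

lemma cross_smul_add_smul (a b c d : ℝ) (x y : E2) :
    cross (a • x + b • y) (c • x + d • y) = (a * d - b * c) * cross x y := by
  simp only [cross, PiLp.add_apply, PiLp.smul_apply, smul_eq_mul]
  ring

lemma cross_sub_smul_self (u w : E2) (k : ℝ) : cross u (w - k • u) = cross u w := by
  simp only [cross, PiLp.sub_apply, PiLp.smul_apply, smul_eq_mul]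
  ring

lemma cross_sq_add_inner_sq (x y : E2) : cross x y ^ 2 + ⟪x, y⟫ ^ 2 = ‖x‖ ^ 2 * ‖y‖ ^ 2 := by
  rw [inner_eq_fin_two, norm_sq_eq_fin_two, norm_sq_eq_fin_two, cross]
  ring

lemma linearIndependent_pair_iff_cross_ne_zero (x y : E2) :
    LinearIndependent ℝ ![x, y] ↔ cross x y ≠ 0 := by
  rw [LinearIndependent.pair_iff]
  constructor
  · intro h hxy
    -- when `cross x y = 0`, `(y i, -x i)` is a relation for each `i`; one of them is nontrivial
    have key : ∀ s t : ℝ, (s, t) ≠ 0 → s * x 0 + t * y 0 = 0 → s * x 1 + t * y 1 = 0 → False :=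
      fun s t hst h0 h1 => hst <| Prod.ext_iff.2 <| h s t <| by
        ext i; fin_cases i <;> simpa
    by_cases hx : x = 0
    · exact key 1 0 (by simp) (by simp [hx]) (by simp [hx])
    by_cases h0 : y 0 = 0 ∧ x 0 = 0
    · have hx1 : x 1 ≠ 0 := fun h1 => hx (by ext i; fin_cases i <;> simp [h0.2, h1])
      exact key (y 1) (-x 1) (by simp [hx1]) (by rw [h0.1, h0.2]; ring) (by ring)
    · refine key (y 0) (-x 0) (by simpa [not_and_or, or_comm] using h0) (by ring) ?_
      unfold cross at hxy
      linear_combination -hxy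
  · intro hxy s t h
    have h0 : s * x 0 + t * y 0 = 0 := by simpa using congrArg (· 0) h
    have h1 : s * x 1 + t * y 1 = 0 := by simpa using congrArg (· 1) h
    constructor
    · refine (mul_eq_zero.1 ?_).resolve_right hxy
      unfold cross
      linear_combination y 1 * h0 - y 0 * h1
    · refine (mul_eq_zero.1 ?_).resolve_right hxy
      unfold cross
      linear_combination x 0 * h1 - x 1 * h0

namespace IsZBasis

variable {Λ : Set E2} {x₁ x₂ : E2}

lemma mem_iff (hB : IsZBasis Λ x₁ x₂) {v : E2} :
    v ∈ Λ ↔ ∃ a b : ℤ, v = (a : ℝ) • x₁ + (b : ℝ) • x₂ := by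
  simp only [hB.2, Set.mem_ofPred_eq, Int.cast_smul_eq_zsmul]

lemma intCast_smul_add_mem (hB : IsZBasis Λ x₁ x₂) (a b : ℤ) :
    (a : ℝ) • x₁ + (b : ℝ) • x₂ ∈ Λ :=
  hB.mem_iff.2 ⟨a, b, rfl⟩

lemma left_mem (hB : IsZBasis Λ x₁ x₂) : x₁ ∈ Λ := by
  simpa using hB.intCast_smul_add_mem 1 0

lemma right_mem (hB : IsZBasis Λ x₁ x₂) : x₂ ∈ Λ := by
  simpa using hB.intCast_smul_add_mem 0 1

lemma cross_ne_zero (hB : IsZBasis Λ x₁ x₂) : cross x₁ x₂ ≠ 0 :=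
  (linearIndependent_pair_iff_cross_ne_zero _ _).1 hB.1

lemma eq_span (hB : IsZBasis Λ x₁ x₂) : Λ = Submodule.span ℤ (Set.range ![x₁, x₂]) := by
  ext v
  rw [SetLike.mem_coe, Matrix.range_cons_cons_empty, Submodule.mem_span_pair, hB.2]
  simp only [Set.mem_ofPred_eq, eq_comm]

lemma sub_intCast_smul_mem (hB : IsZBasis Λ x₁ x₂) {v w : E2} (hv : v ∈ Λ) (hw : w ∈ Λ)
    (k : ℤ) : v - (k : ℝ) • w ∈ Λ := by
  rw [hB.eq_span] at hv hw ⊢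
  rw [Int.cast_smul_eq_zsmul]
  exact sub_mem hv (Submodule.smul_mem _ k hw)

lemma finite_closedBall_inter (hB : IsZBasis Λ x₁ x₂) (R : ℝ) :
    (Metric.closedBall 0 R ∩ Λ).Finite := by
  let b := basisOfLinearIndependentOfCardEqFinrank hB.1 (by simp)
  have hb : ⇑b = ![x₁, x₂] := coe_basisOfLinearIndependentOfCardEqFinrank _ _
  rw [hB.eq_span, ← hb]
  exact ZSpan.setFinite_inter b Metric.isBounded_closedBall

lemma exists_forall_norm_le (hB : IsZBasis Λ x₁ x₂) :
    ∃ u ∈ Λ, u ≠ 0 ∧ ∀ v ∈ Λ, v ≠ 0 → ‖u‖ ≤ ‖v‖ := by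
  have hx₁ : x₁ ≠ 0 := fun h => hB.cross_ne_zero (by simp [cross, h])
  obtain ⟨u, ⟨⟨huR, hu⟩, hu0⟩, hmin⟩ := Set.exists_min_image _ (‖·‖)
    ((hB.finite_closedBall_inter ‖x₁‖).sdiff (t := {0})) ⟨x₁, ⟨by simp, hB.left_mem⟩, hx₁⟩
  refine ⟨u, hu, hu0, fun v hv hv0 => ?_⟩
  by_cases hvR : ‖v‖ ≤ ‖x₁‖
  · exact hmin v ⟨⟨by simpa using hvR, hv⟩, hv0⟩
  · exact (mem_closedBall_zero_iff.1 huR).trans (not_le.1 hvR).le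

lemma abs_cross_le_of_mem (hB : IsZBasis Λ x₁ x₂) {y₁ y₂ : E2} (hy₁ : y₁ ∈ Λ) (hy₂ : y₂ ∈ Λ)
    (hy : cross y₁ y₂ ≠ 0) : |cross x₁ x₂| ≤ |cross y₁ y₂| := by
  obtain ⟨a, b, rfl⟩ := hB.mem_iff.1 hy₁
  obtain ⟨c, d, rfl⟩ := hB.mem_iff.1 hy₂
  rw [cross_smul_add_smul] at hy ⊢
  have hm : a * d - b * c ≠ 0 := by exact_mod_cast left_ne_zero_of_mul hy
  have h1 : (1 : ℝ) ≤ |(a * d - b * c : ℝ)| := by exact_mod_cast Int.one_le_abs hm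
  rw [abs_mul]
  exact le_mul_of_one_le_left (abs_nonneg _) h1

lemma abs_cross_eq {y₁ y₂ : E2} (hx : IsZBasis Λ x₁ x₂) (hy : IsZBasis Λ y₁ y₂) :
    |cross x₁ x₂| = |cross y₁ y₂| :=
  le_antisymm (hx.abs_cross_le_of_mem hy.left_mem hy.right_mem hy.cross_ne_zero)
    (hy.abs_cross_le_of_mem hx.left_mem hx.right_mem hx.cross_ne_zero)

lemma latDet_eq (hB : IsZBasis Λ x₁ x₂) : latDet Λ = |cross x₁ x₂| := by
  have h : IsLattice Λ := ⟨x₁, x₂, hB⟩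
  rw [latDet, dif_pos h]
  exact h.choose_spec.choose_spec.abs_cross_eq hB

lemma exists_cross_eq_of_forall_norm_le (hB : IsZBasis Λ x₁ x₂) {u : E2} (hu : u ∈ Λ)
    (hu0 : u ≠ 0) (hmin : ∀ v ∈ Λ, v ≠ 0 → ‖u‖ ≤ ‖v‖) : ∃ w ∈ Λ, cross u w = cross x₁ x₂ := by
  obtain ⟨a, b, rfl⟩ := hB.mem_iff.1 hu
  -- `u = g • u'` with `g = gcd a b` and `u' ∈ Λ`, so minimality forces `g = 1`
  have hg : Int.gcd a b = 1 := by
    obtain ⟨a', ha⟩ := Int.gcd_dvd_left a b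
    obtain ⟨b', hb⟩ := Int.gcd_dvd_right a b
    have hsplit : (a : ℝ) • x₁ + (b : ℝ) • x₂ =
        (Int.gcd a b : ℝ) • ((a' : ℝ) • x₁ + (b' : ℝ) • x₂) := by
      have ha' : (a : ℝ) = Int.gcd a b * a' := by exact_mod_cast ha
      have hb' : (b : ℝ) = Int.gcd a b * b' := by exact_mod_cast hb
      rw [ha', hb']
      module
    rw [hsplit] at hu0 hmin
    have hle := hmin _ (hB.intCast_smul_add_mem a' b') (right_ne_zero_of_smul hu0)
    rw [norm_smul, Real.norm_natCast] at hle
    have hg0 : Int.gcd a b ≠ 0 := by exact_mod_cast left_ne_zero_of_smul hu0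
    have hle1 : (Int.gcd a b : ℝ) ≤ 1 :=
      le_of_mul_le_mul_right (by simpa using hle) (norm_pos_iff.2 (right_ne_zero_of_smul hu0))
    have : Int.gcd a b ≤ 1 := by exact_mod_cast hle1
    omega
  obtain ⟨s, t, hst⟩ := Int.isCoprime_iff_gcd_eq_one.2 hg
  refine ⟨((-t : ℤ) : ℝ) • x₁ + (s : ℝ) • x₂, hB.intCast_smul_add_mem _ _, ?_⟩
  have hdet : (a : ℝ) * s - b * ((-t : ℤ) : ℝ) = 1 := by push_cast; exact_mod_cast (by linarith)
  rw [cross_smul_add_smul, hdet, one_mul]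

lemma exists_cross_eq_abs_inner_le (hB : IsZBasis Λ x₁ x₂) {u : E2} (hu : u ∈ Λ)
    (hu0 : u ≠ 0) (hmin : ∀ v ∈ Λ, v ≠ 0 → ‖u‖ ≤ ‖v‖) :
    ∃ w ∈ Λ, cross u w = cross x₁ x₂ ∧ |⟪u, w⟫| ≤ ‖u‖ ^ 2 / 2 := by
  obtain ⟨w, hw, hcross⟩ := hB.exists_cross_eq_of_forall_norm_le hu hu0 hmin
  set r := ⟪u, w⟫ / ‖u‖ ^ 2
  refine ⟨w - (round r : ℝ) • u, hB.sub_intCast_smul_mem hw hu _,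
    by rw [cross_sub_smul_self, hcross], ?_⟩
  have hu2 : ‖u‖ ^ 2 ≠ 0 := by positivity
  have hinner : ⟪u, w - (round r : ℝ) • u⟫ = ‖u‖ ^ 2 * (r - round r) := by
    rw [inner_sub_right, real_inner_smul_right, real_inner_self_eq_norm_sq, mul_sub,
      mul_div_cancel₀ _ hu2, mul_comm]
  calc |⟪u, w - (round r : ℝ) • u⟫| = ‖u‖ ^ 2 * |r - round r| := by
        rw [hinner, abs_mul, abs_of_nonneg (sq_nonneg _)]
    _ ≤ ‖u‖ ^ 2 * (1 / 2) := by gcongr; exact abs_sub_round r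
    _ = ‖u‖ ^ 2 / 2 := by ring

end IsZBasis

lemma succMin_one_eq_norm {Λ : Set E2} {u : E2} (hu : u ∈ Λ) (hu0 : u ≠ 0)
    (hmin : ∀ v ∈ Λ, v ≠ 0 → ‖u‖ ≤ ‖v‖) : succMin Λ 1 = ‖u‖ := by
  have hmem : ‖u‖ ∈ {r : ℝ | 0 < r ∧ ∃ v : Fin 1 → E2,
      (∀ j, v j ∈ Λ ∧ ‖v j‖ ≤ r) ∧ LinearIndependent ℝ v} :=
    ⟨norm_pos_iff.2 hu0, fun _ => u, fun _ => ⟨hu, le_rfl⟩, linearIndependent_unique_iff.2 hu0⟩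
  refine le_antisymm (csInf_le ⟨0, fun r hr => hr.1.le⟩ hmem) (le_csInf ⟨_, hmem⟩ ?_)
  rintro r ⟨-, v, hv, hind⟩
  exact (hmin (v 0) (hv 0).1 (hind.ne_zero 0)).trans (hv 0).2

lemma sqrt_three_mul_sq_le_two_mul_abs_cross {u w : E2} (huw : ‖u‖ ≤ ‖w‖)
    (hinner : |⟪u, w⟫| ≤ ‖u‖ ^ 2 / 2) : √3 * ‖u‖ ^ 2 ≤ 2 * |cross u w| := by
  have hlagrange := cross_sq_add_inner_sq u w
  have hinner2 : ⟪u, w⟫ ^ 2 ≤ (‖u‖ ^ 2 / 2) ^ 2 := sq_le_sq' (abs_le.1 hinner).1 (abs_le.1 hinner).2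
  have huw2 : ‖u‖ ^ 2 ≤ ‖w‖ ^ 2 := by gcongr
  rw [← pow_le_pow_iff_left₀ (by positivity) (by positivity) two_ne_zero, mul_pow,
    Real.sq_sqrt zero_le_three, mul_pow, sq_abs]
  nlinarith [sq_nonneg ‖u‖]

lemma density_le_of_isLattice {Λ : Set E2} (hΛ : IsLattice Λ) : density Λ ≤ π / (2 * √3) := by
  obtain ⟨x₁, x₂, hB⟩ := hΛ
  obtain ⟨u, hu, hu0, hmin⟩ := hB.exists_forall_norm_le
  obtain ⟨w, hw, hcross, hinner⟩ := hB.exists_cross_eq_abs_inner_le hu hu0 hmin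
  have hw0 : w ≠ 0 := by
    rintro rfl
    exact hB.cross_ne_zero (by rw [← hcross]; simp [cross])
  have hpos : 0 < |cross u w| := abs_pos.2 (hcross ▸ hB.cross_ne_zero)
  have hkey := sqrt_three_mul_sq_le_two_mul_abs_cross (hmin w hw hw0) hinner
  rw [density, succMin_one_eq_norm hu hu0 hmin, hB.latDet_eq, ← hcross,
    div_le_div_iff₀ (by positivity) (by positivity)]
  calc π * ‖u‖ ^ 2 * (2 * √3) = 2 * π * (√3 * ‖u‖ ^ 2) := by ring
    _ ≤ 2 * π * (2 * |cross u w|) := by gcongr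
    _ = π * (4 * |cross u w|) := by ring

lemma Int.one_le_sq_add_mul_add_sq {a b : ℤ} (h : a ≠ 0 ∨ b ≠ 0) : 1 ≤ a ^ 2 + a * b + b ^ 2 := by
  rcases eq_or_ne b 0 with rfl | hb
  · simpa using Int.one_le_abs (h.resolve_right (not_not.2 rfl))
  · nlinarith [sq_nonneg (2 * a + b), Int.one_le_abs hb, sq_abs b]

lemma density_hexLattice : density hexLattice = π / (2 * √3) := by
  set v₁ : E2 := (WithLp.equiv 2 (Fin 2 → ℝ)).symm ![1, 0]
  set v₂ : E2 := (WithLp.equiv 2 (Fin 2 → ℝ)).symm ![1 / 2, √3 / 2]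
  have hcross : cross v₁ v₂ = √3 / 2 := by simp [cross, v₁, v₂]
  have hB : IsZBasis hexLattice v₁ v₂ :=
    ⟨(linearIndependent_pair_iff_cross_ne_zero _ _).2 (by rw [hcross]; positivity), rfl⟩
  have hnorm : ∀ a b : ℤ, ‖(a : ℝ) • v₁ + (b : ℝ) • v₂‖ ^ 2 = a ^ 2 + a * b + b ^ 2 := by
    intro a b
    rw [norm_sq_eq_fin_two]
    simp only [Fin.isValue, WithLp.equiv_symm_apply, one_div, PiLp.add_apply, PiLp.smul_apply,
      Matrix.cons_val_zero, smul_eq_mul, mul_one, Matrix.cons_val_one, Matrix.cons_val_fin_one,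
      mul_zero, zero_add, v₁, v₂]
    linear_combination (b : ℝ) ^ 2 / 4 * Real.sq_sqrt zero_le_three
  have hv₁ : ‖v₁‖ = 1 := by simp [v₁, EuclideanSpace.norm_eq]
  have hmin : ∀ v ∈ hexLattice, v ≠ 0 → ‖v₁‖ ≤ ‖v‖ := by
    rintro v hv hv0
    obtain ⟨a, b, rfl⟩ := hB.mem_iff.1 hv
    have hab : a ≠ 0 ∨ b ≠ 0 := by
      by_contra! h
      simp [h] at hv0
    have h1 : (1 : ℝ) ≤ a ^ 2 + a * b + b ^ 2 := by exact_mod_cast Int.one_le_sq_add_mul_add_sq hab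
    rw [hv₁]
    exact le_of_pow_le_pow_left₀ two_ne_zero (norm_nonneg _) (by rwa [one_pow, hnorm])
  have hv₁0 : v₁ ≠ 0 := by simp [v₁]
  rw [density, succMin_one_eq_norm hB.left_mem hv₁0 hmin, hB.latDet_eq, hcross, hv₁,
    abs_of_pos (by positivity)]
  ring

/-- Every full-rank lattice `Λ ⊆ ℝ²` satisfies
`Δ(Λ) ≤ π/(2√3) = Δ(Λ_h)`. -/
theorem stmt11 (Λ : Set E2) (hΛ : IsLattice Λ) :
    density Λ ≤ π / (2 * Real.sqrt 3) ∧ density Λ ≤ density hexLattice := by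
  have h := density_le_of_isLattice hΛ
  exact ⟨h, density_hexLattice ▸ h⟩
end
end
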